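/- Let H ∈ M_n(ℂ) with associated non-backtracking matrix B. Let λ ∈ ℂ satisfy λ² ≠ H_ij·H_ji for all i, j ∈ [n]. Define the n×n matrix H(λ) by H(λ)_ij = λ·H_ij/(λ² − H_ij·H_ji) and the diagonal matrix M(λ) = diag(m_i(λ))_{i∈[n]} with m_i(λ) = 1 + Σ_{k∈[n]} H_ik·H_ki/(λ² − H_ik·H_ki). Then λ is an eigenvalue of B if and only if det(M(λ) − H(λ)) = 0. -/

import Mathlib

/-- The non-backtracking operator of a square matrix `H`: the matrix indexed by ordered
pairs `e = (i,j)`, `f = (k,l)` with entries `B e f = H k l` if `j = k` and `i ≠ l`,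
and `0` otherwise. -/
def nonBacktracking {n : ℕ} (H : Matrix (Fin n) (Fin n) ℂ) :
    Matrix (Fin n × Fin n) (Fin n × Fin n) ℂ :=
  Matrix.of fun e f => if e.2 = f.1 ∧ e.1 ≠ f.2 then H f.1 f.2 else 0

/-!
Write `U e j = [e.2 = j]` (`tailIncidence`), `V i f = [f.1 = i] H f.1 f.2` (`headWeight`) and
let `J` be the weighted reversal `J e e.swap = H e.2 e.1` (`reversal`). Then `B = U V - J`, so `z - B = (z + J) - U V`. Since `J²` is the
diagonal matrix of the products `H i j H j i`, the matrix `z + J` is inverted by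
`(z - J) diag(z² - H i j H j i)⁻¹`, and the matrix determinant lemma gives
`det (z - B) = det (z + J) · det (1 - V (z + J)⁻¹ U)` with `det (z + J) ≠ 0`.
A direct computation identifies the `n × n` matrix `1 - V (z + J)⁻¹ U` with `M(z) - H(z)`.
-/

open Matrix

theorem Matrix.det_sub_mul {m n α : Type*} [Fintype m] [DecidableEq m] [Fintype n]
    [DecidableEq n] [CommRing α] {A : Matrix m m α} (U : Matrix m n α) (V : Matrix n m α)
    (hA : IsUnit A.det) : (A - U * V).det = A.det * (1 - V * A⁻¹ * U).det := by
  rw [sub_eq_add_neg, ← Matrix.neg_mul, det_add_mul _ _ hA, Matrix.mul_neg, ← sub_eq_add_neg]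

namespace NonBacktracking

section CommRing

variable {ι R : Type*} [Fintype ι] [DecidableEq ι] [CommRing R] (H : Matrix ι ι R) (z : R)

def reversal : Matrix (ι × ι) (ι × ι) R :=
  of fun e f => if f = e.swap then H e.2 e.1 else 0

variable (ι R) in
def tailIncidence : Matrix (ι × ι) ι R :=
  of fun e j => if e.2 = j then 1 else 0

def headWeight : Matrix ι (ι × ι) R :=
  of fun i f => if f.1 = i then H f.1 f.2 else 0

def edgeGap (e : ι × ι) : R := z ^ 2 - H e.1 e.2 * H e.2 e.1

omit [Fintype ι] [DecidableEq ι] in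
theorem edgeGap_comm (i j : ι) : edgeGap H z (j, i) = edgeGap H z (i, j) := by
  simp [edgeGap, mul_comm]

theorem reversal_mul_reversal :
    reversal H * reversal H = diagonal fun e => H e.1 e.2 * H e.2 e.1 := by
  ext e f
  simp only [reversal, mul_apply, of_apply, ite_mul, zero_mul, Finset.sum_ite_eq',
    Finset.mem_univ, if_true, Prod.fst_swap, Prod.snd_swap, diagonal_apply]
  simp [eq_comm, mul_comm]

theorem algebraMap_add_reversal_mul_algebraMap_sub_reversal :
    (algebraMap R _ z + reversal H) * (algebraMap R _ z - reversal H) =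
      diagonal (edgeGap H z) := by
  rw [← (Algebra.commute_algebraMap_left z (reversal H)).mul_self_sub_mul_self_eq,
    reversal_mul_reversal, ← map_mul, algebraMap_eq_diagonal, diagonal_sub]
  congr 1
  ext e
  simp [edgeGap, sq]

theorem mul_tailIncidence_apply {α : Type*} (N : Matrix α (ι × ι) R) (a : α) (j : ι) :
    (N * tailIncidence ι R) a j = ∑ k, N a (k, j) := by
  simp [tailIncidence, Matrix.mul_apply, Fintype.sum_prod_type]

theorem tailIncidence_mul_apply {β : Type*} (N : Matrix ι β R) (e : ι × ι) (b : β) :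
    (tailIncidence ι R * N) e b = N e.2 b := by
  simp [tailIncidence, Matrix.mul_apply]

theorem headWeight_mul_apply {β : Type*} (N : Matrix (ι × ι) β R) (i : ι) (b : β) :
    (headWeight H * N) i b = ∑ k, H i k * N (i, k) b := by
  simp [headWeight, Matrix.mul_apply, Fintype.sum_prod_type]

end CommRing

section Field

variable {ι K : Type*} [Fintype ι] [DecidableEq ι] [Field K] (H : Matrix ι ι K) {z : K}

theorem algebraMap_add_reversal_mul_eq_one (hz : ∀ e, edgeGap H z e ≠ 0) :
    (algebraMap K _ z + reversal H) *
      ((algebraMap K _ z - reversal H) * diagonal fun e => (edgeGap H z e)⁻¹) = 1 := by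
  rw [← Matrix.mul_assoc, algebraMap_add_reversal_mul_algebraMap_sub_reversal,
    diagonal_mul_diagonal]
  simp [hz]

theorem headWeight_mul_inv_mul_tailIncidence (hz : ∀ e, edgeGap H z e ≠ 0) :
    headWeight H * (algebraMap K _ z + reversal H)⁻¹ * tailIncidence ι K =
      of (fun i j => z * H i j / edgeGap H z (i, j)) -
        diagonal fun i => ∑ k, H i k * H k i / edgeGap H z (i, k) := by
  rw [inv_eq_right_inv (algebraMap_add_reversal_mul_eq_one H hz)]
  ext i j
  rw [Matrix.mul_assoc, headWeight_mul_apply]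
  simp_rw [mul_tailIncidence_apply]
  simp only [algebraMap_eq_diagonal, reversal, Matrix.mul_apply, Matrix.sub_apply, diagonal_apply,
    Pi.algebraMap_apply, Algebra.algebraMap_self, RingHom.id_apply, of_apply, Prod.swap_prod_mk,
    mul_ite, sub_mul, ite_mul, zero_mul, mul_zero, Finset.sum_ite_eq', Finset.mem_univ,
    ↓reduceIte, Prod.mk.injEq, eq_comm (b := j), ite_and, Finset.sum_sub_distrib,
    Finset.sum_ite_eq, mul_sub, Finset.sum_ite_irrel, Finset.sum_const_zero]
  split_ifs with hji
  · subst hji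
    simp_rw [edgeGap_comm H z _ j]
    simp only [div_eq_mul_inv, mul_assoc, mul_comm z]
  · simp only [div_eq_mul_inv, mul_assoc, mul_comm z]

end Field

theorem nonBacktracking_eq {n : ℕ} (H : Matrix (Fin n) (Fin n) ℂ) :
    nonBacktracking H = tailIncidence (Fin n) ℂ * headWeight H - reversal H := by
  ext e f
  obtain ⟨i, j⟩ := e
  obtain ⟨k, l⟩ := f
  rw [Matrix.sub_apply, tailIncidence_mul_apply]
  simp only [nonBacktracking, headWeight, reversal, of_apply, Prod.swap_prod_mk, Prod.mk.injEq]
  by_cases hjk : j = k <;> by_cases hil : i = l <;> simp [hjk, hil, eq_comm]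

end NonBacktracking

open NonBacktracking in
/-- **Generalized Ihara–Bass formula.**
Let `H ∈ M_n(ℂ)` with non-backtracking matrix `B`, and let `z ∈ ℂ` satisfy
`z² ≠ Hᵢⱼ Hⱼᵢ` for all `i, j`.  With `H(z)ᵢⱼ = z Hᵢⱼ/(z² - Hᵢⱼ Hⱼᵢ)` and
`M(z) = diag(1 + ∑ₖ Hᵢₖ Hₖᵢ/(z² - Hᵢₖ Hₖᵢ))`, the number `z` is an eigenvalue of `B`
if and only if `det(M(z) - H(z)) = 0`. -/
theorem ihara_bass_formula {n : ℕ} (H : Matrix (Fin n) (Fin n) ℂ) (z : ℂ)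
    (hz : ∀ i j : Fin n, z ^ 2 ≠ H i j * H j i) :
    z ∈ spectrum ℂ (nonBacktracking H) ↔
      (Matrix.diagonal (fun i : Fin n => 1 + ∑ k, H i k * H k i / (z ^ 2 - H i k * H k i))
        - Matrix.of fun i j : Fin n => z * H i j / (z ^ 2 - H i j * H j i)).det = 0 := by
  have hgap : ∀ e, edgeGap H z e ≠ 0 := fun e => sub_ne_zero.mpr (hz e.1 e.2)
  have hunit : IsUnit (algebraMap ℂ _ z + reversal H).det :=
    isUnit_det_of_right_inverse (algebraMap_add_reversal_mul_eq_one H hgap)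
  have hrearrange : 1 - (of (fun i j => z * H i j / edgeGap H z (i, j)) -
      diagonal fun i => ∑ k, H i k * H k i / edgeGap H z (i, k)) =
      diagonal (fun i => 1 + ∑ k, H i k * H k i / edgeGap H z (i, k)) -
        of fun i j => z * H i j / edgeGap H z (i, j) := by
    rw [← diagonal_add, diagonal_one]
    abel
  rw [spectrum.mem_iff, isUnit_iff_isUnit_det, nonBacktracking_eq, ← sub_add,
    sub_add_eq_add_sub, det_sub_mul _ _ hunit, headWeight_mul_inv_mul_tailIncidence H hgap,
    hrearrange, isUnit_iff_ne_zero, not_ne_iff, mul_eq_zero, or_iff_right hunit.ne_zero]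
  rfl
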